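/- arXiv:1310.2515 — 2 statements merged into one kernel-verified Lean document; each statement's English description precedes it below -/
import Mathlib

section
/- Let q ∈ (0,1) and let x(u) = (f(u) − 1)/κ(u) for u > 0. Then x is differentiable on (0,∞) and for every θ > 0 the (improper) integral of the local particle density over the rightward region equals 1/κ(θ): ∫_0^θ [ −log q / (log q + log(1−q) + Ψ_q(u)) ] · x'(u) du = 1/κ(θ). -/
/-!
Writing `g = q^(u+k)`, one has `g²/(1-g)² = q^u · q^k/(1-g)² - g/(1-g)`, so
`f(u) = q^u κ(u) - S(u)` with `S(u) = Σ_k q^(u+k)/(1-q^(u+k))` the series in `Ψ_q`, and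
termwise differentiation gives `S' = log q · q^u κ`. Hence `x = q^u - (S + 1)/κ` has derivative
`x' = (S + 1) κ'/κ²`.
Since `log q + log(1-q) + Ψ_q = log q · (1 + S)`, the integrand is `-κ'/κ² = (1/κ)'`, which is
nonnegative (so integrable), and `1/κ(u) ≤ (1 - q^u)² → 0` as `u → 0⁺`.
-/

open Set Filter MeasureTheory
open scoped Topology

theorem integral_eq_sub_of_hasDerivAt_of_tendsto_of_nonneg {f f' : ℝ → ℝ} {a b fa : ℝ}
    (hab : a < b) (hderiv : ∀ x ∈ Ioc a b, HasDerivAt f (f' x) x)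
    (hpos : ∀ x ∈ Ioo a b, 0 ≤ f' x) (ha : Tendsto f (𝓝[>] a) (𝓝 fa)) :
    ∫ x in a..b, f' x = f b - fa := by
  classical
  -- Redefining `f a := fa` makes `f` continuous on `[a, b]`, so its nonnegative derivative is
  -- integrable there.
  have hFderiv : ∀ x ∈ Ioo a b, HasDerivAt (Function.update f a fa) (f' x) x := fun x hx =>
    (hderiv x (Ioo_subset_Ioc_self hx)).congr_of_eventuallyEq <|
      (eventually_ne_nhds hx.1.ne').mono fun y hy => Function.update_of_ne hy _ _
  have hFcont : ContinuousOn (Function.update f a fa) (Icc a b) := by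
    rw [continuousOn_update_iff, Icc_sdiff_left]
    exact ⟨fun x hx => (hderiv x hx).continuousAt.continuousWithinAt,
      fun _ => ha.mono_left (nhdsWithin_mono _ Ioc_subset_Ioi_self)⟩
  have hint : IntervalIntegrable f' volume a b :=
    (intervalIntegrable_iff_integrableOn_Ioc_of_le hab.le).2 <|
      intervalIntegral.integrableOn_deriv_of_nonneg hFcont hFderiv hpos
  exact intervalIntegral.integral_eq_sub_of_hasDerivAt_of_tendsto hab
    (fun x hx => hderiv x (Ioo_subset_Ioc_self hx)) hint ha
    ((hderiv b (right_mem_Ioc.2 hab)).continuousAt.tendsto.mono_left nhdsWithin_le_nhds)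

namespace QKappa

noncomputable def kappa (q θ : ℝ) : ℝ := ∑' k : ℕ, q ^ k / (1 - q ^ (θ + k)) ^ 2

noncomputable def digammaSum (q z : ℝ) : ℝ := ∑' k : ℕ, q ^ (z + k) / (1 - q ^ (z + k))

noncomputable def kappaDeriv (q u : ℝ) : ℝ :=
  ∑' k : ℕ, 2 * Real.log q * q ^ (u + k) * (q ^ k / (1 - q ^ (u + k)) ^ 3)

variable {q : ℝ} (hq0 : 0 < q) (hq1 : q < 1)
include hq0 hq1

lemma one_sub_rpow_pos {t : ℝ} (ht : 0 < t) : 0 < 1 - q ^ t :=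
  sub_pos.2 (Real.rpow_lt_one hq0.le hq1 ht)

lemma one_sub_rpow_le_one_sub_rpow {s t : ℝ} (hst : s ≤ t) : 1 - q ^ s ≤ 1 - q ^ t :=
  sub_le_sub_left (Real.rpow_le_rpow_of_exponent_ge hq0 hq1.le hst) 1

lemma rpow_add_natCast_le_pow {u : ℝ} (hu : 0 ≤ u) (k : ℕ) : q ^ (u + k) ≤ q ^ k := by
  rw [← Real.rpow_natCast]
  exact Real.rpow_le_rpow_of_exponent_ge hq0 hq1.le (by linarith)

lemma pow_div_one_sub_rpow_le {a u : ℝ} (ha : 0 < a) (hau : a ≤ u) (k n : ℕ) :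
    q ^ k / (1 - q ^ (u + k)) ^ n ≤ q ^ k / (1 - q ^ a) ^ n :=
  div_le_div_of_nonneg_left (by positivity) (pow_pos (one_sub_rpow_pos hq0 hq1 ha) n)
    (pow_le_pow_left₀ (one_sub_rpow_pos hq0 hq1 ha).le
      (one_sub_rpow_le_one_sub_rpow hq0 hq1 (by linarith [k.cast_nonneg (α := ℝ)])) n)

lemma summable_pow_div_one_sub_rpow {u : ℝ} (hu : 0 < u) (n : ℕ) :
    Summable fun k : ℕ => q ^ k / (1 - q ^ (u + k)) ^ n :=
  Summable.of_nonneg_of_le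
    (fun k => div_nonneg (by positivity) (pow_pos (one_sub_rpow_pos hq0 hq1 (by positivity)) n).le)
    (pow_div_one_sub_rpow_le hq0 hq1 hu le_rfl · n)
    ((summable_geometric_of_lt_one hq0.le hq1).div_const _)

/-- The common domination bound on `[a, ∞)` for the termwise derivatives of `κ` and `S`. -/
lemma norm_mul_mul_pow_div_le {a u s : ℝ} (c : ℝ) (ha : 0 < a) (hau : a ≤ u) (hs0 : 0 ≤ s)
    (hs1 : s ≤ 1) (k n : ℕ) :
    ‖c * s * (q ^ k / (1 - q ^ (u + k)) ^ n)‖ ≤ |c| * (q ^ k / (1 - q ^ a) ^ n) := by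
  have hu : 0 < u + k := by linarith [k.cast_nonneg (α := ℝ)]
  have hpos : 0 ≤ q ^ k / (1 - q ^ (u + k)) ^ n :=
    div_nonneg (by positivity) (pow_pos (one_sub_rpow_pos hq0 hq1 hu) n).le
  rw [Real.norm_eq_abs, abs_mul, abs_mul, abs_of_nonneg hs0, abs_of_nonneg hpos]
  calc |c| * s * (q ^ k / (1 - q ^ (u + k)) ^ n) ≤ |c| * 1 * (q ^ k / (1 - q ^ a) ^ n) :=
        mul_le_mul (mul_le_mul_of_nonneg_left hs1 (abs_nonneg c))
          (pow_div_one_sub_rpow_le hq0 hq1 ha hau k n) hpos (by positivity)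
    _ = |c| * (q ^ k / (1 - q ^ a) ^ n) := by rw [mul_one]

lemma summable_abs_mul_pow_div {a : ℝ} (c : ℝ) (n : ℕ) :
    Summable fun k : ℕ => |c| * (q ^ k / (1 - q ^ a) ^ n) :=
  ((summable_geometric_of_lt_one hq0.le hq1).div_const _).mul_left _

lemma kappa_pos {u : ℝ} (hu : 0 < u) : 0 < kappa q u :=
  (summable_pow_div_one_sub_rpow hq0 hq1 hu 2).tsum_pos
    (fun k => div_nonneg (by positivity) (sq_nonneg _)) 0
    (by simpa using pow_pos (one_sub_rpow_pos hq0 hq1 hu) 2)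

lemma inv_kappa_le {u : ℝ} (hu : 0 < u) : (kappa q u)⁻¹ ≤ (1 - q ^ u) ^ 2 := by
  refine inv_le_of_inv_le₀ (pow_pos (one_sub_rpow_pos hq0 hq1 hu) 2) ?_
  simpa [kappa] using (summable_pow_div_one_sub_rpow hq0 hq1 hu 2).le_tsum 0
    (fun k _ => div_nonneg (by positivity) (sq_nonneg _))

lemma tendsto_inv_kappa_nhdsGT_zero : Tendsto (fun u => (kappa q u)⁻¹) (𝓝[>] 0) (𝓝 0) := by
  have hlim : Tendsto (fun u : ℝ => (1 - q ^ u) ^ 2) (𝓝[>] 0) (𝓝 0) := by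
    have h : Tendsto (fun u : ℝ => (1 - q ^ u) ^ 2) (𝓝 0) (𝓝 ((1 - q ^ (0 : ℝ)) ^ 2)) :=
      ((continuousAt_const.sub (Real.continuousAt_const_rpow hq0.ne')).pow 2).tendsto
    rw [Real.rpow_zero, sub_self, zero_pow two_ne_zero] at h
    exact h.mono_left nhdsWithin_le_nhds
  refine tendsto_of_tendsto_of_tendsto_of_le_of_le' tendsto_const_nhds hlim ?_ ?_ <;>
    filter_upwards [self_mem_nhdsWithin] with u hu
  · exact inv_nonneg.2 (kappa_pos hq0 hq1 hu).le
  · exact inv_kappa_le hq0 hq1 hu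

lemma digammaSum_nonneg {u : ℝ} (hu : 0 < u) : 0 ≤ digammaSum q u :=
  tsum_nonneg fun k => div_nonneg (by positivity) (one_sub_rpow_pos hq0 hq1 (by positivity)).le

lemma kappaDeriv_nonpos {u : ℝ} (hu : 0 < u) : kappaDeriv q u ≤ 0 :=
  tsum_nonpos fun k => mul_nonpos_of_nonpos_of_nonneg
    (mul_nonpos_of_nonpos_of_nonneg
      (mul_nonpos_of_nonneg_of_nonpos zero_le_two (Real.log_nonpos hq0.le hq1.le)) (by positivity))
    (div_nonneg (by positivity) (pow_pos (one_sub_rpow_pos hq0 hq1 (by positivity)) 3).le)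

omit hq1 in
lemma hasDerivAt_rpow_add_natCast (k : ℕ) (u : ℝ) :
    HasDerivAt (fun v : ℝ => q ^ (v + k)) (q ^ (u + k) * Real.log q) u := by
  simpa [mul_comm] using ((hasDerivAt_id' u).add_const (k : ℝ)).const_rpow hq0

lemma hasDerivAt_kappa {u : ℝ} (hu : 0 < u) : HasDerivAt (kappa q) (kappaDeriv q u) u := by
  have hterm : ∀ (k : ℕ) (v : ℝ), 0 < v →
      HasDerivAt (fun w : ℝ => q ^ k / (1 - q ^ (w + k)) ^ 2)
      (2 * Real.log q * q ^ (v + k) * (q ^ k / (1 - q ^ (v + k)) ^ 3)) v := by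
    intro k v hv
    have hne := (one_sub_rpow_pos hq0 hq1 (by positivity : 0 < v + k)).ne'
    have hden : HasDerivAt (fun w : ℝ => (1 - q ^ (w + k)) ^ 2)
        (2 * (1 - q ^ (v + k)) ^ 1 * (0 - q ^ (v + k) * Real.log q)) v :=
      ((hasDerivAt_const v 1).sub (hasDerivAt_rpow_add_natCast hq0 k v)).pow 2
    refine ((hasDerivAt_const v (q ^ k)).div hden (pow_ne_zero 2 hne)).congr_deriv ?_
    field_simp
    ring
  refine hasDerivAt_tsum_of_isPreconnected (summable_abs_mul_pow_div hq0 hq1 (a := u / 2)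
    (2 * Real.log q) 3) isOpen_Ioi isPreconnected_Ioi
    (fun k v (hv : u / 2 < v) => hterm k v (by linarith)) (fun k v (hv : u / 2 < v) => ?_)
    (half_lt_self hu) (summable_pow_div_one_sub_rpow hq0 hq1 hu 2) (half_lt_self hu)
  exact norm_mul_mul_pow_div_le hq0 hq1 _ (half_pos hu) hv.le (by positivity)
    (Real.rpow_le_one hq0.le hq1.le (by linarith [k.cast_nonneg (α := ℝ)])) k 3

lemma hasDerivAt_digammaSum {u : ℝ} (hu : 0 < u) :
    HasDerivAt (digammaSum q) (Real.log q * q ^ u * kappa q u) u := by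
  have hterm : ∀ (k : ℕ) (v : ℝ), 0 < v →
      HasDerivAt (fun w : ℝ => q ^ (w + k) / (1 - q ^ (w + k)))
      (Real.log q * q ^ v * (q ^ k / (1 - q ^ (v + k)) ^ 2)) v := by
    intro k v hv
    have hne := (one_sub_rpow_pos hq0 hq1 (by positivity : 0 < v + k)).ne'
    refine ((hasDerivAt_rpow_add_natCast hq0 k v).div
      ((hasDerivAt_const v 1).sub (hasDerivAt_rpow_add_natCast hq0 k v)) hne).congr_deriv ?_
    simp only [Pi.sub_apply]
    rw [Real.rpow_add_natCast hq0.ne'] at hne ⊢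
    field_simp
    ring
  have h := hasDerivAt_tsum_of_isPreconnected (summable_abs_mul_pow_div hq0 hq1 (a := u / 2)
    (Real.log q) 2) isOpen_Ioi isPreconnected_Ioi
    (fun k v (hv : u / 2 < v) => hterm k v (by linarith))
    (fun k v (hv : u / 2 < v) => norm_mul_mul_pow_div_le hq0 hq1 _ (half_pos hu) hv.le
      (by positivity) (Real.rpow_le_one hq0.le hq1.le (by linarith)) k 2)
    (half_lt_self hu) (summable_pow_div_one_sub_rpow hq0 hq1 hu 1 |>.mul_left (q ^ u) |>.congr
      fun k => by rw [pow_one, Real.rpow_add_natCast hq0.ne', mul_div_assoc]) (half_lt_self hu)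
  rwa [tsum_mul_left] at h

lemma tsum_rpow_two_mul_eq {u : ℝ} (hu : 0 < u) :
    ∑' k : ℕ, q ^ (2 * u + 2 * (k : ℝ)) / (1 - q ^ (u + k)) ^ 2 =
      q ^ u * kappa q u - digammaSum q u := by
  have hterm : ∀ k : ℕ, q ^ (2 * u + 2 * (k : ℝ)) / (1 - q ^ (u + k)) ^ 2 =
      q ^ u * (q ^ k / (1 - q ^ (u + k)) ^ 2) - q ^ (u + k) / (1 - q ^ (u + k)) := by
    intro k
    have hne := (one_sub_rpow_pos hq0 hq1 (by positivity : 0 < u + k)).ne'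
    rw [show 2 * u + 2 * (k : ℝ) = (u + k) + (u + k) by ring, Real.rpow_add hq0]
    rw [Real.rpow_add_natCast hq0.ne'] at hne ⊢
    field_simp
    ring
  rw [tsum_congr hterm, Summable.tsum_sub ((summable_pow_div_one_sub_rpow hq0 hq1 hu 2).mul_left _)
    ?_, tsum_mul_left, kappa, digammaSum]
  exact (summable_pow_div_one_sub_rpow hq0 hq1 hu 1).of_nonneg_of_le
    (fun k => div_nonneg (by positivity) (one_sub_rpow_pos hq0 hq1 (by positivity)).le)
    (fun k => by
      rw [pow_one]
      exact div_le_div_of_nonneg_right (rpow_add_natCast_le_pow hq0 hq1 hu.le k)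
        (one_sub_rpow_pos hq0 hq1 (by positivity)).le)

lemma hasDerivAt_tsum_rpow_two_mul_sub_one_div_kappa {u : ℝ} (hu : 0 < u) :
    HasDerivAt (fun v => (∑' k : ℕ, q ^ (2 * v + 2 * (k : ℝ)) / (1 - q ^ (v + k)) ^ 2 - 1) /
      kappa q v) ((digammaSum q u + 1) * kappaDeriv q u / kappa q u ^ 2) u := by
  have hκ := (kappa_pos hq0 hq1 hu).ne'
  have h := ((Real.hasStrictDerivAt_const_rpow hq0 u).hasDerivAt).sub
    (((hasDerivAt_digammaSum hq0 hq1 hu).add_const 1).div (hasDerivAt_kappa hq0 hq1 hu) hκ)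
  refine (h.congr_of_eventuallyEq ?_).congr_deriv ?_
  · filter_upwards [Ioi_mem_nhds hu] with v hv
    have hκv := (kappa_pos hq0 hq1 hv).ne'
    rw [Pi.sub_apply, Pi.div_apply, tsum_rpow_two_mul_eq hq0 hq1 hv]
    field_simp
    ring
  · field_simp
    ring

lemma hasDerivAt_inv_kappa {u : ℝ} (hu : 0 < u) :
    HasDerivAt (fun v => (kappa q v)⁻¹) (-kappaDeriv q u / kappa q u ^ 2) u :=
  (hasDerivAt_kappa hq0 hq1 hu).inv (kappa_pos hq0 hq1 hu).ne'

end QKappa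

open QKappa in
/-- For `q ∈ (0,1)` and `x(u) = (f(u)−1)/κ(u)`, the function `x`
is differentiable on `(0,∞)` and for every `θ > 0`,
`∫₀^θ [−log q/(log q + log(1−q) + Ψ_q(u))] · x'(u) du = 1/κ(θ)`. -/
theorem stmt_9 (q : ℝ) (hq : q ∈ Set.Ioo (0 : ℝ) 1) :
    let κ : ℝ → ℝ := fun θ => ∑' k : ℕ, q ^ (k : ℕ) / (1 - q ^ (θ + (k : ℝ))) ^ 2
    let f : ℝ → ℝ := fun θ => ∑' k : ℕ, q ^ (2 * θ + 2 * (k : ℝ)) / (1 - q ^ (θ + (k : ℝ))) ^ 2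
    let Ψ : ℝ → ℝ := fun z =>
      -Real.log (1 - q) + Real.log q * ∑' k : ℕ, q ^ (z + (k : ℝ)) / (1 - q ^ (z + (k : ℝ)))
    let x : ℝ → ℝ := fun u => (f u - 1) / κ u
    DifferentiableOn ℝ x (Set.Ioi 0) ∧
    ∀ θ : ℝ, 0 < θ →
      (∫ u in (0 : ℝ)..θ,
        (-Real.log q / (Real.log q + Real.log (1 - q) + Ψ u)) * deriv x u) = 1 / κ θ := by
  obtain ⟨hq0, hq1⟩ := hq
  intro κ f Ψ x
  have hx : ∀ u, 0 < u →
      HasDerivAt x ((digammaSum q u + 1) * kappaDeriv q u / kappa q u ^ 2) u :=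
    fun u hu => hasDerivAt_tsum_rpow_two_mul_sub_one_div_kappa hq0 hq1 hu
  refine ⟨fun u hu => (hx u hu).differentiableAt.differentiableWithinAt, fun θ hθ => ?_⟩
  have hintegrand : ∀ u, 0 < u →
      -Real.log q / (Real.log q + Real.log (1 - q) + Ψ u) * deriv x u =
        -kappaDeriv q u / kappa q u ^ 2 := by
    intro u hu
    have hS := (digammaSum_nonneg hq0 hq1 hu).trans_lt (lt_add_one _)
    have hlog := (Real.log_neg hq0 hq1).ne
    have hκ := (kappa_pos hq0 hq1 hu).ne'
    rw [(hx u hu).deriv, show Real.log q + Real.log (1 - q) + Ψ u =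
      Real.log q * (digammaSum q u + 1) by simp only [Ψ, digammaSum]; ring]
    field_simp
  rw [integral_eq_sub_of_hasDerivAt_of_tendsto_of_nonneg hθ
    (fun u hu => hintegrand u hu.1 ▸ hasDerivAt_inv_kappa hq0 hq1 hu.1)
    (fun u hu => hintegrand u hu.1 ▸ div_nonneg (neg_nonneg.2 (kappaDeriv_nonpos hq0 hq1 hu.1))
      (sq_nonneg _))
    (tendsto_inv_kappa_nhdsGT_zero hq0 hq1), sub_zero, one_div]
  rfl
end

section
/- Let q ∈ (0,1) and θ > 0, and define f₀ : (0,∞) → ℝ by f₀(z) = −f(θ)(log q)z + κ(θ) q^z + Σ_{k=0}^∞ log(1 − q^{z+k}). Then f₀ is three times differentiable at z = θ, and θ is a double critical point: f₀'(θ) = 0, f₀''(θ) = 0, and f₀'''(θ) = Ψ_q'(θ) log q − Ψ_q''(θ) (= 2χ, where χ = (Ψ_q'(θ) log q − Ψ_q''(θ))/2). -/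
/-!
With `u = q ^ (z + k)`, differentiating a series `∑ φ (q ^ (z + k))` termwise in `z` multiplies
by `log q` and replaces `φ u` by `u φ' u`; on `z > c > 0` this is justified by the geometric
majorant `|φ'| q ^ (c + k)`, with `φ'` bounded on `[0, q ^ c]`. Starting from `log (1 - u)`
this produces `-u/(1-u)`, `u/(1-u)²` and `u(1+u)/(1-u)³`, so with `S₁, S₂, S₃` the series of these
`f₀' = log q (κ q^z - f - S₁)`, `f₀'' = (log q)² (κ q^z - S₂)`, `f₀''' = (log q)³ (κ q^z - S₃)`.
At `z = θ` one has `κ q^θ = S₂(θ)`, and `f = S₂(θ) - S₁(θ)` because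
`u/(1-u)² = u²/(1-u)² + u/(1-u)`.
-/

open Real Set Filter Topology

noncomputable def qSeries (q : ℝ) (φ : ℝ → ℝ) (z : ℝ) : ℝ :=
  ∑' k : ℕ, φ (q ^ (z + k))

lemma summable_rpow_add_natCast {q : ℝ} (hq : q ∈ Ioo 0 1) (c : ℝ) :
    Summable fun k : ℕ => q ^ (c + k) :=
  ((summable_geometric_of_lt_one hq.1.le hq.2).mul_left (q ^ c)).congr fun k => by
    rw [rpow_add hq.1, rpow_natCast]

lemma rpow_add_natCast_lt_one {q : ℝ} (hq : q ∈ Ioo 0 1) {z : ℝ} (hz : 0 < z) (k : ℕ) :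
    q ^ (z + k) < 1 :=
  rpow_lt_one hq.1.le hq.2 (by positivity)

lemma rpow_add_natCast_mem_Icc {q : ℝ} (hq : q ∈ Ioo 0 1) {c z : ℝ} (hcz : c ≤ z)
    (k : ℕ) : q ^ (z + k) ∈ Icc 0 (q ^ c) :=
  ⟨(rpow_pos_of_pos hq.1 _).le,
    rpow_le_rpow_of_exponent_ge hq.1 hq.2.le (by linarith [k.cast_nonneg (α := ℝ)])⟩

section TermwiseDerivative

variable {φ φ' : ℝ → ℝ}

lemma exists_abs_le_of_continuousOn_Iio (hφ' : ContinuousOn φ' (Iio 1)) {r : ℝ} (hr : r < 1) :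
    ∃ C, ∀ x ∈ Icc 0 r, |φ' x| ≤ C :=
  isCompact_Icc.exists_bound_of_continuousOn (hφ'.mono fun _ hx => hx.2.trans_lt hr)

lemma abs_le_mul_of_hasDerivAt_of_map_zero (hφ : ∀ x < 1, HasDerivAt φ (φ' x) x)
    (hφ0 : φ 0 = 0) {r C : ℝ} (hr : r < 1) (hC : ∀ x ∈ Icc 0 r, |φ' x| ≤ C) {x : ℝ}
    (hx : x ∈ Icc 0 r) : |φ x| ≤ C * x := by
  have h := (convex_Icc 0 r).norm_image_sub_le_of_norm_hasDerivWithin_le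
    (fun y hy => (hφ y (hy.2.trans_lt hr)).hasDerivWithinAt) hC
    (left_mem_Icc.2 (hx.1.trans hx.2)) hx
  simpa [hφ0, abs_of_nonneg hx.1] using h

variable {q : ℝ} (hq : q ∈ Ioo 0 1) (hφ : ∀ x < 1, HasDerivAt φ (φ' x) x)
  (hφ' : ContinuousOn φ' (Iio 1)) (hφ0 : φ 0 = 0)
include hq hφ hφ' hφ0

lemma summable_comp_rpow_add_natCast {z : ℝ} (hz : 0 < z) :
    Summable fun k : ℕ => φ (q ^ (z + k)) := by
  have hr := rpow_lt_one hq.1.le hq.2 hz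
  obtain ⟨C, hC⟩ := exists_abs_le_of_continuousOn_Iio hφ' hr
  refine .of_norm_bounded ((summable_rpow_add_natCast hq z).mul_left C) fun k => ?_
  exact abs_le_mul_of_hasDerivAt_of_map_zero hφ hφ0 hr hC
    (rpow_add_natCast_mem_Icc hq le_rfl k)

lemma hasDerivAt_qSeries {z : ℝ} (hz : 0 < z) :
    HasDerivAt (qSeries q φ) (log q * qSeries q (fun x => x * φ' x) z) z := by
  have hc : 0 < z / 2 := by positivity
  obtain ⟨C, hC⟩ := exists_abs_le_of_continuousOn_Iio hφ' (rpow_lt_one hq.1.le hq.2 hc)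
  have hterm : ∀ (k : ℕ) (y : ℝ), y ∈ Ioi (z / 2) →
      HasDerivAt (fun y : ℝ => φ (q ^ (y + k))) (φ' (q ^ (y + k)) * (log q * 1 * q ^ (y + k))) y :=
    fun k y hy =>
    (hφ _ (rpow_add_natCast_lt_one hq (hc.trans hy) k)).comp y
      (((hasDerivAt_id y).add_const _).const_rpow hq.1)
  have hbound : ∀ (k : ℕ) (y : ℝ), y ∈ Ioi (z / 2) →
      ‖φ' (q ^ (y + k)) * (log q * 1 * q ^ (y + k))‖ ≤ |log q| * C * q ^ (z / 2 + k) := by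
    intro k y hy
    have hu := rpow_add_natCast_mem_Icc hq hy.out.le k
    have hle : q ^ (y + k) ≤ q ^ (z / 2 + k) :=
      rpow_le_rpow_of_exponent_ge hq.1 hq.2.le (by linarith [hy.out])
    rw [Real.norm_eq_abs, abs_mul, abs_mul, mul_one, abs_of_nonneg hu.1]
    calc |φ' (q ^ (y + k))| * (|log q| * q ^ (y + k))
        ≤ C * (|log q| * q ^ (z / 2 + k)) :=
          mul_le_mul (hC _ hu) (by gcongr) (mul_nonneg (abs_nonneg _) hu.1)
            ((abs_nonneg _).trans (hC _ hu))
      _ = |log q| * C * q ^ (z / 2 + k) := by ring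
  have hmem : z ∈ Ioi (z / 2) := half_lt_self hz
  refine (hasDerivAt_tsum_of_isPreconnected ((summable_rpow_add_natCast hq _).mul_left _)
    isOpen_Ioi isPreconnected_Ioi hterm hbound hmem
    (summable_comp_rpow_add_natCast hq hφ hφ' hφ0 hz) hmem).congr_deriv ?_
  rw [qSeries, ← tsum_mul_left]
  exact tsum_congr fun k => by ring

end TermwiseDerivative

lemma hasDerivAt_log_one_sub {x : ℝ} (hx : x < 1) :
    HasDerivAt (fun x => log (1 - x)) (-1 / (1 - x)) x :=
  ((hasDerivAt_id x).const_sub 1).log (sub_ne_zero.2 hx.ne')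

lemma hasDerivAt_div_one_sub {x : ℝ} (hx : x < 1) :
    HasDerivAt (fun x => x / (1 - x)) (1 / (1 - x) ^ 2) x := by
  have hx' : 1 - x ≠ 0 := sub_ne_zero.2 hx.ne'
  refine ((hasDerivAt_id x).div ((hasDerivAt_id x).const_sub 1) hx').congr_deriv ?_
  simp only [id]
  field_simp
  ring

lemma hasDerivAt_div_one_sub_sq {x : ℝ} (hx : x < 1) :
    HasDerivAt (fun x => x / (1 - x) ^ 2) ((1 + x) / (1 - x) ^ 3) x := by
  have hx' : 1 - x ≠ 0 := sub_ne_zero.2 hx.ne'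
  refine ((hasDerivAt_id x).div (((hasDerivAt_id x).const_sub 1).pow 2)
    (pow_ne_zero 2 hx')).congr_deriv ?_
  simp only [Pi.pow_apply, id]
  field_simp
  ring

lemma continuousOn_div_one_sub_pow {g : ℝ → ℝ} (hg : Continuous g) (n : ℕ) :
    ContinuousOn (fun x => g x / (1 - x) ^ n) (Iio 1) :=
  hg.continuousOn.div (by fun_prop) fun _ hx => pow_ne_zero _ (sub_ne_zero.2 (ne_of_gt hx))

section SeriesOfRpow

variable {q : ℝ} (hq : q ∈ Ioo 0 1)
include hq

lemma hasDerivAt_qSeries_log_one_sub {z : ℝ} (hz : 0 < z) :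
    HasDerivAt (qSeries q fun x => log (1 - x))
      (-(log q * qSeries q (fun x => x / (1 - x)) z)) z := by
  have h := hasDerivAt_qSeries hq (fun x hx => hasDerivAt_log_one_sub hx)
    (by simpa using continuousOn_div_one_sub_pow continuous_const 1) (by simp) hz
  refine h.congr_deriv ?_
  simp only [qSeries, ← tsum_neg, ← mul_neg]
  exact congrArg _ (tsum_congr fun k => by ring)

lemma summable_rpow_add_natCast_div_one_sub {z : ℝ} (hz : 0 < z) :
    Summable fun k : ℕ => q ^ (z + k) / (1 - q ^ (z + k)) :=
  summable_comp_rpow_add_natCast hq (fun _ hx => hasDerivAt_div_one_sub hx)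
    (continuousOn_div_one_sub_pow continuous_const 2) (by simp) hz

lemma summable_rpow_add_natCast_div_one_sub_sq {z : ℝ} (hz : 0 < z) :
    Summable fun k : ℕ => q ^ (z + k) / (1 - q ^ (z + k)) ^ 2 :=
  summable_comp_rpow_add_natCast hq (fun _ hx => hasDerivAt_div_one_sub_sq hx)
    (continuousOn_div_one_sub_pow (by fun_prop) 3) (by simp) hz

lemma hasDerivAt_qSeries_div_one_sub {z : ℝ} (hz : 0 < z) :
    HasDerivAt (qSeries q fun x => x / (1 - x))
      (log q * qSeries q (fun x => x / (1 - x) ^ 2) z) z := by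
  simpa only [mul_one_div] using hasDerivAt_qSeries hq (fun _ hx => hasDerivAt_div_one_sub hx)
    (continuousOn_div_one_sub_pow continuous_const 2) (by simp) hz

lemma hasDerivAt_qSeries_div_one_sub_sq {z : ℝ} (hz : 0 < z) :
    HasDerivAt (qSeries q fun x => x / (1 - x) ^ 2)
      (log q * qSeries q (fun x => x * (1 + x) / (1 - x) ^ 3) z) z := by
  simpa only [← mul_div_assoc] using hasDerivAt_qSeries hq
    (fun _ hx => hasDerivAt_div_one_sub_sq hx) (continuousOn_div_one_sub_pow (by fun_prop) 3)
    (by simp) hz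

lemma tsum_rpow_two_mul_div_one_sub_rpow_sq {θ : ℝ} (hθ : 0 < θ) :
    ∑' k : ℕ, q ^ (2 * θ + 2 * (k : ℝ)) / (1 - q ^ (θ + k)) ^ 2 =
      qSeries q (fun x => x / (1 - x) ^ 2) θ - qSeries q (fun x => x / (1 - x)) θ := by
  rw [qSeries, qSeries, ← (summable_rpow_add_natCast_div_one_sub_sq hq hθ).tsum_sub
    (summable_rpow_add_natCast_div_one_sub hq hθ)]
  refine tsum_congr fun k => ?_
  have hu : 1 - q ^ (θ + k) ≠ 0 := sub_ne_zero.2 (rpow_add_natCast_lt_one hq hθ k).ne'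
  rw [show 2 * θ + 2 * (k : ℝ) = (θ + k) + (θ + k) by ring, rpow_add hq.1]
  field_simp
  ring

section Derivatives

variable (a b : ℝ) {z : ℝ} (hz : 0 < z)
include hz

lemma hasDerivAt_linear_add_rpow_add_qSeries_log_one_sub :
    HasDerivAt (fun z => -b * log q * z + a * q ^ z + qSeries q (fun x => log (1 - x)) z)
      (log q * (a * q ^ z - b - qSeries q (fun x => x / (1 - x)) z)) z := by
  refine ((((hasDerivAt_id z).const_mul (-b * log q)).add
    ((hasStrictDerivAt_const_rpow hq.1 z).hasDerivAt.const_mul a)).add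
    (hasDerivAt_qSeries_log_one_sub hq hz)).congr_deriv ?_
  ring

lemma hasDerivAt_log_mul_rpow_sub_qSeries_div_one_sub :
    HasDerivAt (fun z => log q * (a * q ^ z - b - qSeries q (fun x => x / (1 - x)) z))
      (log q ^ 2 * (a * q ^ z - qSeries q (fun x => x / (1 - x) ^ 2) z)) z := by
  refine ((((hasStrictDerivAt_const_rpow hq.1 z).hasDerivAt.const_mul a).sub_const b).sub
    (hasDerivAt_qSeries_div_one_sub hq hz)).const_mul (log q) |>.congr_deriv ?_
  ring

lemma hasDerivAt_log_sq_mul_rpow_sub_qSeries_div_one_sub_sq :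
    HasDerivAt (fun z => log q ^ 2 * (a * q ^ z - qSeries q (fun x => x / (1 - x) ^ 2) z))
      (log q ^ 3 * (a * q ^ z - qSeries q (fun x => x * (1 + x) / (1 - x) ^ 3) z)) z := by
  refine (((hasStrictDerivAt_const_rpow hq.1 z).hasDerivAt.const_mul a).sub
    (hasDerivAt_qSeries_div_one_sub_sq hq hz)).const_mul (log q ^ 2) |>.congr_deriv ?_
  ring

end Derivatives

end SeriesOfRpow

lemma tsum_pow_div_one_sub_rpow_sq_mul_rpow {q : ℝ} (hq : 0 < q) (θ : ℝ) :
    (∑' k : ℕ, q ^ k / (1 - q ^ (θ + k)) ^ 2) * q ^ θ =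
      qSeries q (fun x => x / (1 - x) ^ 2) θ := by
  rw [qSeries, ← tsum_mul_right]
  refine tsum_congr fun k => ?_
  rw [rpow_add hq, rpow_natCast]
  ring

/-- For `q ∈ (0,1)`, `θ > 0`, the real function
`f₀(z) = −f(θ)(log q)z + κ(θ)q^z + Σ log(1 − q^(z+k))` is three times
differentiable at `θ`, which is a double critical point:
`f₀'(θ) = 0`, `f₀''(θ) = 0` and `f₀'''(θ) = Ψ_q'(θ) log q − Ψ_q''(θ)`. -/
theorem stmt_13 (q θ : ℝ) (hq : q ∈ Set.Ioo (0 : ℝ) 1) (hθ : 0 < θ) :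
    let κ : ℝ := ∑' k : ℕ, q ^ (k : ℕ) / (1 - q ^ (θ + (k : ℝ))) ^ 2
    let f : ℝ := ∑' k : ℕ, q ^ (2 * θ + 2 * (k : ℝ)) / (1 - q ^ (θ + (k : ℝ))) ^ 2
    let f₀ : ℝ → ℝ := fun z =>
      -f * Real.log q * z + κ * q ^ z + ∑' k : ℕ, Real.log (1 - q ^ (z + (k : ℝ)))
    let Ψ' : ℝ → ℝ := fun z =>
      (Real.log q) ^ 2 * ∑' k : ℕ, q ^ (z + (k : ℝ)) / (1 - q ^ (z + (k : ℝ))) ^ 2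
    let Ψ'' : ℝ → ℝ := fun z =>
      (Real.log q) ^ 3 *
        ∑' k : ℕ, q ^ (z + (k : ℝ)) * (1 + q ^ (z + (k : ℝ))) / (1 - q ^ (z + (k : ℝ))) ^ 3
    HasDerivAt f₀ 0 θ ∧
    HasDerivAt (deriv f₀) 0 θ ∧
    HasDerivAt (deriv (deriv f₀)) (Ψ' θ * Real.log q - Ψ'' θ) θ := by
  intro κ f f₀ Ψ' Ψ''
  set S₁ := qSeries q fun x => x / (1 - x)
  set S₂ := qSeries q fun x => x / (1 - x) ^ 2
  have hκ : κ * q ^ θ = S₂ θ := tsum_pow_div_one_sub_rpow_sq_mul_rpow hq.1 θ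
  have hf : f = S₂ θ - S₁ θ := tsum_rpow_two_mul_div_one_sub_rpow_sq hq hθ
  have hd₁ : ∀ z > 0, HasDerivAt f₀ (log q * (κ * q ^ z - f - S₁ z)) z := fun z hz =>
    hasDerivAt_linear_add_rpow_add_qSeries_log_one_sub hq κ f hz
  have hd₂ : ∀ z > 0, HasDerivAt (fun z => log q * (κ * q ^ z - f - S₁ z))
      (log q ^ 2 * (κ * q ^ z - S₂ z)) z := fun z hz =>
    hasDerivAt_log_mul_rpow_sub_qSeries_div_one_sub hq κ f hz
  have hd₃ := hasDerivAt_log_sq_mul_rpow_sub_qSeries_div_one_sub_sq hq κ hθ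
  have hnhds : Ioi 0 ∈ 𝓝 θ := Ioi_mem_nhds hθ
  have hderiv₁ : deriv f₀ =ᶠ[𝓝 θ] fun z => log q * (κ * q ^ z - f - S₁ z) :=
    eventuallyEq_of_mem hnhds fun z hz => (hd₁ z hz).deriv
  have hderiv₂ : deriv (deriv f₀) =ᶠ[𝓝 θ] fun z => log q ^ 2 * (κ * q ^ z - S₂ z) :=
    hderiv₁.deriv.trans (eventuallyEq_of_mem hnhds fun z hz => (hd₂ z hz).deriv)
  refine ⟨?_, ?_, ?_⟩
  · refine (hd₁ θ hθ).congr_deriv ?_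
    rw [hκ, hf]
    ring
  · refine ((hd₂ θ hθ).congr_of_eventuallyEq hderiv₁).congr_deriv ?_
    rw [hκ]
    ring
  · refine (hd₃.congr_of_eventuallyEq hderiv₂).congr_deriv ?_
    rw [hκ]
    show _ = log q ^ 2 * S₂ θ * log q -
      log q ^ 3 * qSeries q (fun x => x * (1 + x) / (1 - x) ^ 3) θ
    ring
end
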